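/- arXiv:1403.2378 — 3 statements merged into one kernel-verified Lean document; each statement's English description precedes it below -/
import Mathlib

section
/- (Kress–Sloan) Let s > 1/2 and 0 ≤ t ≤ s. There is a constant C_{t,s} such that for every integer n ≥ 1 and every continuous 2π-periodic F : ℝ → ℂ with ‖F‖_{H^s(𝕋)} < ∞ (taking the continuous representative given by its uniformly convergent Fourier series), the trigonometric interpolant satisfies ‖I_nF − F‖_{H^t(𝕋)} ≤ C_{t,s} n^{t−s} ‖F‖_{H^s(𝕋)}. -/
open MeasureTheory

/-- Fourier coefficients of a `2π`-periodic function: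
`F̂_k = (1/(2π)) ∫_0^{2π} e^{-ikθ} F(θ) dθ`. -/
noncomputable def fourierCoeffT (F : ℝ → ℂ) (k : ℤ) : ℂ :=
  (1 / (2 * Real.pi) : ℂ) * ∫ θ in (0 : ℝ)..(2 * Real.pi),
    Complex.exp (-Complex.I * (k : ℂ) * (θ : ℂ)) * F θ

/-- The periodic Sobolev norm `‖F‖_{H^s(𝕋)} = (∑_k (1+|k|)^{2s} |F̂_k|²)^{1/2}`. -/
noncomputable def sobNormT (s : ℝ) (F : ℝ → ℂ) : ℝ :=
  (∑' k : ℤ, (1 + |(k : ℝ)|) ^ (2 * s) * ‖fourierCoeffT F k‖ ^ 2) ^ ((1 : ℝ) / 2)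

/-- The trigonometric interpolant `I_n F(θ) = ∑_{k=-n₋}^{n₊} e^{ikθ} F̃_k`,
where `F̃_k = (1/n) ∑_{ℓ=0}^{n-1} e^{-ikθ_ℓ} F(θ_ℓ)`, `θ_ℓ = 2πℓ/n`,
`n₊ = ⌊n/2⌋`, `n₋ = ⌊(n-1)/2⌋`. -/
noncomputable def trigInterp (n : ℕ) (F : ℝ → ℂ) (θ : ℝ) : ℂ :=
  ∑ k ∈ Finset.Icc (-(((n - 1) / 2 : ℕ) : ℤ)) ((n / 2 : ℕ) : ℤ),
    Complex.exp (Complex.I * (k : ℂ) * (θ : ℂ)) *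
      ((n : ℂ)⁻¹ * ∑ ℓ ∈ Finset.range n,
        Complex.exp (-Complex.I * (k : ℂ) * ((2 * Real.pi * ℓ / n : ℝ) : ℂ)) *
          F (2 * Real.pi * ℓ / n))

/-!
The Fourier coefficients of the error `I_n F - F` can be computed exactly. Outside the window
`-n₋ ≤ k ≤ n₊` they are `-F̂_k`. Inside it, discrete orthogonality of the `e^{ikθ_ℓ}` together
with pointwise convergence of the Fourier series (absolutely summable because `s > 1/2`) turns
them into the aliasing sums `∑_{m ≠ 0} F̂_{k+mn}`. Off the window
`(1+|k|)^{2t} ≤ (n/2)^{2(t-s)} (1+|k|)^{2s}`. In the window, Cauchy–Schwarz with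
`1 + |k+mn| ≥ |m| n/2` bounds each aliasing sum by `(n/2)^{-2s} ∑_{m ≠ 0} |m|^{-2s}` times the
`H^s`-mass of the residue class of `k`, and distinct window points lie in distinct residue classes.
-/

open Function

instance : Fact (0 < 2 * Real.pi) := ⟨Real.two_pi_pos⟩

local notation "𝕋" => AddCircle (2 * Real.pi)

section FourierSeries

theorem fourier_coe_two_pi (k : ℤ) (x : ℝ) :
    fourier k (x : 𝕋) = Complex.exp (Complex.I * k * x) := by
  rw [fourier_coe_apply]
  congr 1
  push_cast
  field_simp

theorem fourierCoeffT_comp_coe (H : 𝕋 → ℂ) (k : ℤ) :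
    fourierCoeffT (fun θ => H θ) k = fourierCoeff H k := by
  rw [fourierCoeff_eq_intervalIntegral H k 0, zero_add, fourierCoeffT, Complex.real_smul]
  simp only [fourier_coe_two_pi, smul_eq_mul]
  push_cast
  ring_nf

theorem integrable_haarAddCircle {T : ℝ} [Fact (0 < T)] (f : C(AddCircle T, ℂ)) :
    Integrable f AddCircle.haarAddCircle :=
  f.continuous.integrable_of_hasCompactSupport (.of_compactSpace _)

theorem fourierCoeff_sub {T : ℝ} [Fact (0 < T)] (f g : C(AddCircle T, ℂ)) (k : ℤ) :
    fourierCoeff ⇑(f - g) k = fourierCoeff f k - fourierCoeff g k := by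
  simp only [fourierCoeff, ContinuousMap.coe_sub, Pi.sub_apply, smul_sub]
  exact integral_sub ((integrable_haarAddCircle f).fourier_smul _)
    ((integrable_haarAddCircle g).fourier_smul _)

noncomputable def periodicLift {E : Type*} [TopologicalSpace E] {F : ℝ → E} {c : ℝ}
    (hF : Continuous F) (hp : Periodic F c) : C(AddCircle c, E) :=
  ⟨hp.lift, isQuotientMap_quotient_mk'.continuous_iff.2 hF⟩

@[simp]
theorem periodicLift_coe {E : Type*} [TopologicalSpace E] {F : ℝ → E} {c : ℝ}
    (hF : Continuous F) (hp : Periodic F c) (x : ℝ) : periodicLift hF hp x = F x :=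
  hp.lift_coe x

theorem fourierCoeff_periodicLift {F : ℝ → ℂ} (hF : Continuous F)
    (hp : Periodic F (2 * Real.pi)) (k : ℤ) :
    fourierCoeff (periodicLift hF hp) k = fourierCoeffT F k := by
  simp only [← fourierCoeffT_comp_coe, periodicLift_coe]

theorem hasSum_fourierCoeffT_mul_exp {F : ℝ → ℂ} (hF : Continuous F)
    (hp : Periodic F (2 * Real.pi)) (hsum : Summable (fourierCoeffT F)) (θ : ℝ) :
    HasSum (fun k : ℤ => fourierCoeffT F k * Complex.exp (Complex.I * k * θ)) (F θ) := by
  have hc : Summable (fourierCoeff (periodicLift hF hp)) := by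
    rwa [show fourierCoeff (periodicLift hF hp) = fourierCoeffT F from
      funext (fourierCoeff_periodicLift hF hp)]
  simpa only [smul_eq_mul, fourier_coe_two_pi, fourierCoeff_periodicLift, periodicLift_coe]
    using has_pointwise_sum_fourier_series_of_summable hc (θ : 𝕋)

noncomputable def trigPoly {T : ℝ} (s : Finset ℤ) (c : ℤ → ℂ) : C(AddCircle T, ℂ) :=
  ∑ k ∈ s, c k • fourier k

theorem fourierCoeff_trigPoly {T : ℝ} [Fact (0 < T)] (s : Finset ℤ) (c : ℤ → ℂ) (k : ℤ) :
    fourierCoeff (trigPoly (T := T) s c) k = if k ∈ s then c k else 0 := by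
  rw [trigPoly, ContinuousMap.coe_sum,
    fourierCoeff.sum _ _ fun i _ => integrable_haarAddCircle (c i • fourier i), Finset.sum_apply]
  simp only [ContinuousMap.coe_smul, fourierCoeff.const_smul, fourierCoeff_fourier,
    Pi.single_apply, smul_eq_mul, mul_ite, mul_one, mul_zero, Finset.sum_ite_eq]

end FourierSeries

section Interpolation

noncomputable def dftCoeff (n : ℕ) (F : ℝ → ℂ) (k : ℤ) : ℂ :=
  (n : ℂ)⁻¹ * ∑ ℓ ∈ Finset.range n,
    Complex.exp (-Complex.I * (k : ℂ) * ((2 * Real.pi * ℓ / n : ℝ) : ℂ)) *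
      F (2 * Real.pi * ℓ / n)

noncomputable def interpWindow (n : ℕ) : Finset ℤ :=
  Finset.Icc (-(((n - 1) / 2 : ℕ) : ℤ)) ((n / 2 : ℕ) : ℤ)

theorem trigInterp_eq_trigPoly (n : ℕ) (F : ℝ → ℂ) (θ : ℝ) :
    trigInterp n F θ = trigPoly (interpWindow n) (dftCoeff n F) (θ : 𝕋) := by
  simp only [trigPoly, trigInterp, ContinuousMap.coe_sum, ContinuousMap.coe_smul,
    Finset.sum_apply, Pi.smul_apply, fourier_coe_two_pi, smul_eq_mul, mul_comm, interpWindow,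
    dftCoeff]

theorem fourierCoeffT_trigInterp_sub {F : ℝ → ℂ} (hF : Continuous F)
    (hp : Periodic F (2 * Real.pi)) (n : ℕ) (k : ℤ) :
    fourierCoeffT (fun θ => trigInterp n F θ - F θ) k =
      (if k ∈ interpWindow n then dftCoeff n F k else 0) - fourierCoeffT F k := by
  have h : (fun θ : ℝ => trigInterp n F θ - F θ) = fun θ : ℝ =>
      (trigPoly (interpWindow n) (dftCoeff n F) - periodicLift hF hp : C(𝕋, ℂ)) θ := by
    ext θ
    simp [trigInterp_eq_trigPoly]
  rw [h, fourierCoeffT_comp_coe, fourierCoeff_sub, fourierCoeff_trigPoly,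
    fourierCoeff_periodicLift]

theorem sum_range_exp_mul_two_pi_div {n : ℕ} (hn : n ≠ 0) (d : ℤ) :
    ∑ ℓ ∈ Finset.range n, Complex.exp (Complex.I * d * ((2 * Real.pi * ℓ / n : ℝ) : ℂ)) =
      if (n : ℤ) ∣ d then (n : ℂ) else 0 := by
  set ζ := Complex.exp (2 * Real.pi * Complex.I / n)
  have hζ : IsPrimitiveRoot ζ n := Complex.isPrimitiveRoot_exp n hn
  have hterm : ∀ ℓ : ℕ,
      Complex.exp (Complex.I * d * ((2 * Real.pi * ℓ / n : ℝ) : ℂ)) = (ζ ^ d) ^ ℓ := by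
    intro ℓ
    rw [← Complex.exp_int_mul, ← Complex.exp_nat_mul]
    congr 1
    push_cast
    ring
  simp only [hterm]
  split_ifs with hd
  · simp [(hζ.zpow_eq_one_iff_dvd d).2 hd]
  · have hpow : (ζ ^ d) ^ n = 1 := by
      rw [← zpow_natCast, ← zpow_mul, mul_comm, zpow_mul, zpow_natCast, hζ.pow_eq_one, one_zpow]
    rw [geom_sum_eq (mt (hζ.zpow_eq_one_iff_dvd d).1 hd), hpow, sub_self, zero_div]

theorem injective_add_mul_natCast (k : ℤ) {n : ℕ} (hn : n ≠ 0) :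
    Injective fun m : ℤ => k + m * n :=
  fun _ _ h => mul_right_cancel₀ (Nat.cast_ne_zero.2 hn) (add_left_cancel h)

theorem hasSum_dftCoeff {a : ℤ → ℂ} {F : ℝ → ℂ}
    (hF : ∀ θ : ℝ, HasSum (fun j : ℤ => a j * Complex.exp (Complex.I * j * θ)) (F θ))
    {n : ℕ} (hn : n ≠ 0) (k : ℤ) :
    HasSum (fun m : ℤ => a (k + m * n)) (dftCoeff n F k) := by
  have hnodes : HasSum (fun j : ℤ => a j * ((n : ℂ)⁻¹ * ∑ ℓ ∈ Finset.range n,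
      Complex.exp (Complex.I * (j - k : ℤ) * ((2 * Real.pi * ℓ / n : ℝ) : ℂ))))
      (dftCoeff n F k) := by
    refine ((hasSum_sum (s := Finset.range n) fun (ℓ : ℕ) _ =>
      (hF (2 * Real.pi * ℓ / n)).mul_left
        (Complex.exp (-Complex.I * k * ((2 * Real.pi * ℓ / n : ℝ) : ℂ)))).mul_left
          (n : ℂ)⁻¹).congr_fun fun j => ?_
    rw [Finset.mul_sum, Finset.mul_sum, Finset.mul_sum]
    refine Finset.sum_congr rfl fun ℓ _ => ?_
    have hexp : Complex.exp (Complex.I * (j - k : ℤ) * ((2 * Real.pi * ℓ / n : ℝ) : ℂ)) =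
        Complex.exp (-Complex.I * k * ((2 * Real.pi * ℓ / n : ℝ) : ℂ)) *
          Complex.exp (Complex.I * j * ((2 * Real.pi * ℓ / n : ℝ) : ℂ)) := by
      rw [← Complex.exp_add]
      push_cast
      ring_nf
    rw [hexp]
    ring
  simp only [sum_range_exp_mul_two_pi_div hn] at hnodes
  refine (((injective_add_mul_natCast k hn).hasSum_iff fun j hj => ?_).2 hnodes).congr_fun
    fun m => ?_
  · rw [if_neg fun ⟨m, hm⟩ => hj ⟨m, by simp only; linarith⟩, mul_zero, mul_zero]
  · simp [Nat.cast_ne_zero.2 hn]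

end Interpolation

section WeightedSums

theorem summable_mul_and_sq_tsum_mul_le {ι : Type*} {f g : ι → ℝ} (hf : ∀ i, 0 ≤ f i)
    (hg : ∀ i, 0 ≤ g i) (hf2 : Summable fun i => f i ^ 2) (hg2 : Summable fun i => g i ^ 2) :
    Summable (fun i => f i * g i) ∧
      (∑' i, f i * g i) ^ 2 ≤ (∑' i, f i ^ 2) * ∑' i, g i ^ 2 := by
  have key := Real.summable_and_inner_le_Lp_mul_Lq_tsum_of_nonneg .two_two hf hg
    (by simpa only [Real.rpow_two] using hf2) (by simpa only [Real.rpow_two] using hg2)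
  simp only [Real.rpow_two, ← Real.sqrt_eq_rpow] at key
  refine ⟨key.1, ?_⟩
  calc (∑' i, f i * g i) ^ 2 ≤ (√(∑' i, f i ^ 2) * √(∑' i, g i ^ 2)) ^ 2 :=
        pow_le_pow_left₀ (tsum_nonneg fun i => mul_nonneg (hf i) (hg i)) key.2 2
    _ = (∑' i, f i ^ 2) * ∑' i, g i ^ 2 := by
        rw [mul_pow, Real.sq_sqrt (tsum_nonneg fun i => sq_nonneg _),
          Real.sq_sqrt (tsum_nonneg fun i => sq_nonneg _)]

theorem summable_of_norm_le_mul {ι E : Type*} [NormedAddCommGroup E] [CompleteSpace E]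
    {u : ι → E} {f g : ι → ℝ} (hf : ∀ i, 0 ≤ f i) (hg : ∀ i, 0 ≤ g i)
    (hf2 : Summable fun i => f i ^ 2) (hg2 : Summable fun i => g i ^ 2)
    (hu : ∀ i, ‖u i‖ ≤ f i * g i) : Summable u :=
  .of_norm_bounded (summable_mul_and_sq_tsum_mul_le hf hg hf2 hg2).1 hu

theorem HasSum.norm_sq_le_of_norm_le_mul {ι E : Type*} [NormedAddCommGroup E]
    {u : ι → E} {e : E} (he : HasSum u e) {f g : ι → ℝ} (hf : ∀ i, 0 ≤ f i)
    (hg : ∀ i, 0 ≤ g i) (hf2 : Summable fun i => f i ^ 2) (hg2 : Summable fun i => g i ^ 2)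
    (hu : ∀ i, ‖u i‖ ≤ f i * g i) : ‖e‖ ^ 2 ≤ (∑' i, f i ^ 2) * ∑' i, g i ^ 2 := by
  obtain ⟨hfg, hCS⟩ := summable_mul_and_sq_tsum_mul_le hf hg hf2 hg2
  exact (pow_le_pow_left₀ (norm_nonneg e) (he.norm_le_of_bounded hfg.hasSum hu) 2).trans hCS

theorem rpow_sq_eq_rpow_two_mul {x : ℝ} (hx : 0 ≤ x) (r : ℝ) : (x ^ r) ^ 2 = x ^ (2 * r) := by
  rw [← Real.rpow_mul_natCast hx, mul_comm]
  norm_num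

noncomputable def sobWeight (r : ℝ) (k : ℤ) : ℝ := (1 + |(k : ℝ)|) ^ r

theorem sobWeight_pos (r : ℝ) (k : ℤ) : 0 < sobWeight r k := by
  unfold sobWeight
  positivity

theorem sobWeight_add (r₁ r₂ : ℝ) (k : ℤ) :
    sobWeight (r₁ + r₂) k = sobWeight r₁ k * sobWeight r₂ k :=
  Real.rpow_add (by positivity) _ _

theorem sobWeight_sq (r : ℝ) (k : ℤ) : sobWeight r k ^ 2 = sobWeight (2 * r) k :=
  rpow_sq_eq_rpow_two_mul (by positivity) r

theorem sobWeight_neg_mul_mul (r : ℝ) (k : ℤ) (x : ℝ) :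
    sobWeight (-r) k * (sobWeight r k * x) = x := by
  rw [← mul_assoc, ← sobWeight_add, neg_add_cancel, sobWeight, Real.rpow_zero, one_mul]

theorem summable_sobWeight_neg {r : ℝ} (hr : 1 < r) : Summable (sobWeight (-r)) := by
  refine .of_norm_bounded_eventually (Real.summable_abs_int_rpow hr) ?_
  filter_upwards [Filter.eventually_cofinite_ne 0] with k hk
  rw [Real.norm_of_nonneg (sobWeight_pos _ k).le]
  exact Real.rpow_le_rpow_of_nonpos (abs_pos.2 (Int.cast_ne_zero.2 hk)) (by linarith)
    (by linarith)

theorem summable_of_summable_sobWeight_mul_norm_sq {E : Type*} [NormedAddCommGroup E]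
    [CompleteSpace E] {s : ℝ} (hs : 1 / 2 < s) {a : ℤ → E}
    (ha : Summable fun k => sobWeight (2 * s) k * ‖a k‖ ^ 2) : Summable a := by
  refine summable_of_norm_le_mul (f := sobWeight (-s)) (g := fun k => sobWeight s k * ‖a k‖)
    (fun k => (sobWeight_pos _ k).le) (fun k => mul_nonneg (sobWeight_pos s k).le (norm_nonneg _))
    ?_ ?_ fun k => (sobWeight_neg_mul_mul s k ‖a k‖).ge
  · simpa only [sobWeight_sq, mul_neg] using summable_sobWeight_neg (by linarith : 1 < 2 * s)
  · simpa only [mul_pow, sobWeight_sq] using ha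

end WeightedSums

section Aliasing

variable {n : ℕ} {k : ℤ}

theorem two_mul_abs_le_of_mem_interpWindow (hk : k ∈ interpWindow n) : 2 * |k| ≤ n := by
  rw [interpWindow, Finset.mem_Icc] at hk
  rcases abs_cases k with ⟨h, _⟩ | ⟨h, _⟩ <;> omega

theorem le_two_mul_abs_of_notMem_interpWindow (hk : k ∉ interpWindow n) : n ≤ 2 * |k| := by
  rw [interpWindow, Finset.mem_Icc] at hk
  rcases abs_cases k with ⟨h, _⟩ | ⟨h, _⟩ <;> omega

theorem one_add_abs_le_of_mem_interpWindow (hn : n ≠ 0) (hk : k ∈ interpWindow n) :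
    1 + |k| ≤ n := by
  have := two_mul_abs_le_of_mem_interpWindow hk
  omega

theorem abs_mul_le_two_mul_abs_add_of_mem_interpWindow (hk : k ∈ interpWindow n) (m : ℤ) :
    |m| * n ≤ 2 * |k + m * n| := by
  have hk' := two_mul_abs_le_of_mem_interpWindow hk
  rcases eq_or_ne m 0 with rfl | hm
  · simp
  have h1 : |m * n| - |k| ≤ |k + m * n| := by
    simpa [add_comm] using abs_sub_abs_le_abs_add (m * n) k
  have h2 : (n : ℤ) ≤ |m| * n :=
    le_mul_of_one_le_left (Nat.cast_nonneg n) (Int.one_le_abs hm)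
  rw [abs_mul, Nat.abs_cast] at h1
  linarith

theorem injective_add_mul_of_interpWindow (hn : n ≠ 0) :
    Injective fun p : interpWindow n × ℤ => (p.1 : ℤ) + p.2 * n := by
  rintro ⟨⟨k, hk⟩, m⟩ ⟨⟨k', hk'⟩, m'⟩ h
  simp only at h
  have hkk : k = k' := by
    rw [interpWindow, Finset.mem_Icc] at hk hk'
    have hdvd : (n : ℤ) ∣ k - k' := ⟨m' - m, by linarith⟩
    have := Int.eq_zero_of_abs_lt_dvd hdvd (by rw [abs_lt]; omega)
    omega
  subst hkk
  have hmm : m = m' := mul_right_cancel₀ (by exact_mod_cast hn) (add_left_cancel h)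
  rw [hmm]

theorem sum_interpWindow_tsum_le (hn : n ≠ 0) {A : ℤ → ℝ} (hA0 : ∀ j, 0 ≤ A j)
    (hA : Summable A) : ∑ k ∈ interpWindow n, ∑' m : ℤ, A (k + m * n) ≤ ∑' j, A j := by
  have hinj := injective_add_mul_of_interpWindow hn
  calc ∑ k ∈ interpWindow n, ∑' m : ℤ, A (k + m * n)
      = ∑' p : interpWindow n × ℤ, A (p.1 + p.2 * n) := by
        rw [← Finset.tsum_subtype]
        exact (hA.comp_injective hinj).tsum_prod.symm
    _ ≤ ∑' j, A j :=
        (hA.comp_injective hinj).tsum_le_tsum_of_inj _ hinj (fun j _ => hA0 j) (fun _ => le_rfl) hA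

theorem tsum_le_of_interpWindow_bounds (hn : n ≠ 0) {A E : ℤ → ℝ} (hA0 : ∀ j, 0 ≤ A j)
    (hA : Summable A) {c₁ c₂ : ℝ} (hc₁ : 0 ≤ c₁) (hc₂ : 0 ≤ c₂)
    (hmem : ∀ k ∈ interpWindow n, E k ≤ c₁ * ∑' m : ℤ, A (k + m * n))
    (hnot : ∀ k ∉ interpWindow n, E k ≤ c₂ * A k) :
    ∑' k, E k ≤ (c₁ + c₂) * ∑' k, A k := by
  refine tsum_le_of_sum_le' (mul_nonneg (add_nonneg hc₁ hc₂) (tsum_nonneg hA0)) fun u => ?_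
  rw [← Finset.sum_inter_add_sum_sdiff u (interpWindow n), add_mul]
  gcongr
  · calc ∑ k ∈ u ∩ interpWindow n, E k
        ≤ ∑ k ∈ interpWindow n, c₁ * ∑' m : ℤ, A (k + m * n) :=
          (Finset.sum_le_sum fun k hk => hmem k (Finset.mem_inter.1 hk).2).trans
            (Finset.sum_le_sum_of_subset_of_nonneg Finset.inter_subset_right
              fun k _ _ => mul_nonneg hc₁ (tsum_nonneg fun m => hA0 _))
      _ ≤ c₁ * ∑' k, A k := by
          rw [← Finset.mul_sum]
          exact mul_le_mul_of_nonneg_left (sum_interpWindow_tsum_le hn hA0 hA) hc₁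
  · calc ∑ k ∈ u \ interpWindow n, E k ≤ ∑ k ∈ u \ interpWindow n, c₂ * A k :=
          Finset.sum_le_sum fun k hk => hnot k (Finset.mem_sdiff.1 hk).2
      _ ≤ c₂ * ∑' k, A k := by
          rw [← Finset.mul_sum]
          exact mul_le_mul_of_nonneg_left (hA.sum_le_tsum _ fun k _ => hA0 k) hc₂

end Aliasing

section ErrorEstimate

variable {s : ℝ} {n : ℕ}

theorem norm_sq_le_of_hasSum_alias (hs : 1 / 2 < s) (hn : n ≠ 0) {k : ℤ}
    (hk : k ∈ interpWindow n) {a : ℤ → ℂ} {e : ℂ}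
    (ha : Summable fun j => sobWeight (2 * s) j * ‖a j‖ ^ 2)
    (he : HasSum (fun m : ℤ => a (k + m * n)) (e + a k)) :
    ‖e‖ ^ 2 ≤ ((n : ℝ) / 2) ^ (-(2 * s)) * (∑' m : ℤ, |(m : ℝ)| ^ (-(2 * s))) *
      ∑' m : ℤ, sobWeight (2 * s) (k + m * n) * ‖a (k + m * n)‖ ^ 2 := by
  have hu : HasSum (update (fun m : ℤ => a (k + m * n)) 0 0) e := by
    simpa using he.update 0 0
  have hpos : 0 < (n : ℝ) / 2 := by positivity
  set f : ℤ → ℝ := fun m => ((n : ℝ) / 2) ^ (-s) * |(m : ℝ)| ^ (-s)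
  set g : ℤ → ℝ := fun m => sobWeight s (k + m * n) * ‖a (k + m * n)‖
  have hf2 : ∀ m, f m ^ 2 = ((n : ℝ) / 2) ^ (-(2 * s)) * |(m : ℝ)| ^ (-(2 * s)) := fun m => by
    rw [mul_pow, rpow_sq_eq_rpow_two_mul hpos.le, rpow_sq_eq_rpow_two_mul (abs_nonneg _),
      mul_neg]
  have hg2 : ∀ m, g m ^ 2 = sobWeight (2 * s) (k + m * n) * ‖a (k + m * n)‖ ^ 2 := fun m => by
    rw [mul_pow, sobWeight_sq]
  have hbound : ∀ m, ‖update (fun m : ℤ => a (k + m * n)) 0 0 m‖ ≤ f m * g m := by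
    intro m
    have hfg : 0 ≤ f m * g m :=
      mul_nonneg (by positivity) (mul_nonneg (sobWeight_pos _ _).le (norm_nonneg _))
    rcases eq_or_ne m 0 with rfl | hm
    · simpa using hfg
    have hshift : (n : ℝ) / 2 * |(m : ℝ)| ≤ 1 + |((k + m * n : ℤ) : ℝ)| := by
      have h := Int.cast_le (R := ℝ) |>.2 (abs_mul_le_two_mul_abs_add_of_mem_interpWindow hk m)
      push_cast at h ⊢
      linarith
    have hweight : sobWeight (-s) (k + m * n) ≤ f m := by
      rw [show f m = ((n : ℝ) / 2 * |(m : ℝ)|) ^ (-s) from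
        (Real.mul_rpow hpos.le (abs_nonneg _)).symm]
      exact Real.rpow_le_rpow_of_nonpos
        (mul_pos hpos (abs_pos.2 (Int.cast_ne_zero.2 hm))) hshift (by linarith)
    rw [update_of_ne hm, ← sobWeight_neg_mul_mul s (k + m * n) ‖a (k + m * n)‖]
    exact mul_le_mul_of_nonneg_right hweight (mul_nonneg (sobWeight_pos _ _).le (norm_nonneg _))
  refine (hu.norm_sq_le_of_norm_le_mul (f := f) (g := g) (fun m => by positivity)
    (fun m => mul_nonneg (sobWeight_pos _ _).le (norm_nonneg _)) ?_ ?_ hbound).trans_eq ?_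
  · simp only [hf2]
    exact (Real.summable_abs_int_rpow (by linarith)).mul_left _
  · simp only [hg2]
    exact ha.comp_injective (injective_add_mul_natCast k hn)
  · simp only [hf2, hg2, tsum_mul_left]

theorem tsum_sobWeight_mul_norm_sq_le_of_alias {t : ℝ} (hs : 1 / 2 < s) (ht : 0 ≤ t)
    (hts : t ≤ s) (hn : n ≠ 0) {a e : ℤ → ℂ}
    (ha : Summable fun j => sobWeight (2 * s) j * ‖a j‖ ^ 2)
    (hmem : ∀ k ∈ interpWindow n, HasSum (fun m : ℤ => a (k + m * n)) (e k + a k))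
    (hnot : ∀ k ∉ interpWindow n, e k = -a k) :
    ∑' k, sobWeight (2 * t) k * ‖e k‖ ^ 2 ≤
      (4 ^ t * ∑' m : ℤ, |(m : ℝ)| ^ (-(2 * s)) + 1) * ((n : ℝ) / 2) ^ (2 * (t - s)) *
        ∑' k, sobWeight (2 * s) k * ‖a k‖ ^ 2 := by
  set Z := ∑' m : ℤ, |(m : ℝ)| ^ (-(2 * s))
  have hZ : 0 ≤ Z := tsum_nonneg fun m => Real.rpow_nonneg (abs_nonneg _) _
  have hpos : 0 < (n : ℝ) / 2 := by positivity
  refine (tsum_le_of_interpWindow_bounds hn (c₁ := 4 ^ t * Z * ((n : ℝ) / 2) ^ (2 * (t - s)))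
    (c₂ := ((n : ℝ) / 2) ^ (2 * (t - s)))
    (fun j => mul_nonneg (sobWeight_pos _ _).le (sq_nonneg _)) ha (by positivity) (by positivity)
    (fun k hk => ?_) (fun k hk => ?_)).trans_eq (by ring)
  · have hweight : sobWeight (2 * t) k ≤ 4 ^ t * ((n : ℝ) / 2) ^ (2 * t) := by
      have h : 1 + |(k : ℝ)| ≤ 2 * ((n : ℝ) / 2) := by
        rw [mul_div_cancel₀ _ two_ne_zero]
        exact_mod_cast one_add_abs_le_of_mem_interpWindow hn hk
      calc sobWeight (2 * t) k ≤ (2 * ((n : ℝ) / 2)) ^ (2 * t) :=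
            Real.rpow_le_rpow (by positivity) h (by positivity)
        _ = 4 ^ t * ((n : ℝ) / 2) ^ (2 * t) := by
            rw [Real.mul_rpow zero_le_two hpos.le, Real.rpow_mul zero_le_two]
            norm_num
    have hpow : ((n : ℝ) / 2) ^ (2 * t) * ((n : ℝ) / 2) ^ (-(2 * s)) =
        ((n : ℝ) / 2) ^ (2 * (t - s)) := by
      rw [← Real.rpow_add hpos]
      ring_nf
    calc sobWeight (2 * t) k * ‖e k‖ ^ 2
        ≤ (4 ^ t * ((n : ℝ) / 2) ^ (2 * t)) * (((n : ℝ) / 2) ^ (-(2 * s)) * Z *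
            ∑' m : ℤ, sobWeight (2 * s) (k + m * n) * ‖a (k + m * n)‖ ^ 2) :=
          mul_le_mul hweight (norm_sq_le_of_hasSum_alias hs hn hk ha (hmem k hk))
            (sq_nonneg _) (by positivity)
      _ = 4 ^ t * Z * ((n : ℝ) / 2) ^ (2 * (t - s)) *
            ∑' m : ℤ, sobWeight (2 * s) (k + m * n) * ‖a (k + m * n)‖ ^ 2 := by
          rw [← hpow]
          ring
  · have hweight : sobWeight (2 * (t - s)) k ≤ ((n : ℝ) / 2) ^ (2 * (t - s)) := by
      have h : (n : ℝ) / 2 ≤ 1 + |(k : ℝ)| := by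
        have : (n : ℝ) ≤ 2 * |(k : ℝ)| := by
          exact_mod_cast le_two_mul_abs_of_notMem_interpWindow hk
        linarith
      exact Real.rpow_le_rpow_of_nonpos hpos h (by linarith)
    rw [hnot k hk, norm_neg, show 2 * t = 2 * (t - s) + 2 * s by ring, sobWeight_add,
      mul_assoc]
    exact mul_le_mul_of_nonneg_right hweight
      (mul_nonneg (sobWeight_pos _ _).le (sq_nonneg _))

end ErrorEstimate

/-- **Kress–Sloan.** For `s > 1/2` and `0 ≤ t ≤ s` there is a constant `C_{t,s}`
such that for every `n ≥ 1` and every continuous `2π`-periodic `F` with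
`‖F‖_{H^s(𝕋)} < ∞`, the trigonometric interpolant satisfies
`‖I_n F − F‖_{H^t(𝕋)} ≤ C_{t,s} n^{t−s} ‖F‖_{H^s(𝕋)}`. -/
theorem kress_sloan (s t : ℝ) (hs : 1 / 2 < s) (ht0 : 0 ≤ t) (hts : t ≤ s) :
    ∃ C : ℝ, 0 < C ∧ ∀ n : ℕ, 1 ≤ n → ∀ F : ℝ → ℂ,
      Continuous F → Function.Periodic F (2 * Real.pi) →
      Summable (fun k : ℤ => (1 + |(k : ℝ)|) ^ (2 * s) * ‖fourierCoeffT F k‖ ^ 2) →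
      sobNormT t (fun θ => trigInterp n F θ - F θ)
        ≤ C * (n : ℝ) ^ (t - s) * sobNormT s F := by
  set K := 4 ^ t * ∑' m : ℤ, |(m : ℝ)| ^ (-(2 * s)) + 1
  have hK : 0 < K := by positivity
  refine ⟨K ^ (1 / 2 : ℝ) / 2 ^ (t - s), by positivity, fun n hn F hF hp hsum => ?_⟩
  have hn0 : n ≠ 0 := by omega
  have hseries := hasSum_fourierCoeffT_mul_exp hF hp
    (summable_of_summable_sobWeight_mul_norm_sq hs hsum)
  have hbound := tsum_sobWeight_mul_norm_sq_le_of_alias hs ht0 hts hn0 hsum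
    (e := fourierCoeffT fun θ => trigInterp n F θ - F θ)
    (fun k hk => by
      simpa [fourierCoeffT_trigInterp_sub hF hp, hk] using hasSum_dftCoeff hseries hn0 k)
    (fun k hk => by simp [fourierCoeffT_trigInterp_sub hF hp, hk])
  have hS : 0 ≤ ∑' k, sobWeight (2 * s) k * ‖fourierCoeffT F k‖ ^ 2 :=
    tsum_nonneg fun k => mul_nonneg (sobWeight_pos _ _).le (sq_nonneg _)
  have hpos : 0 < (n : ℝ) / 2 := by positivity
  calc sobNormT t (fun θ => trigInterp n F θ - F θ)
      ≤ (K * ((n : ℝ) / 2) ^ (2 * (t - s)) *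
          ∑' k, sobWeight (2 * s) k * ‖fourierCoeffT F k‖ ^ 2) ^ (1 / 2 : ℝ) :=
        Real.rpow_le_rpow (tsum_nonneg fun k => mul_nonneg (sobWeight_pos _ _).le (sq_nonneg _))
          hbound (by norm_num)
    _ = K ^ (1 / 2 : ℝ) / 2 ^ (t - s) * (n : ℝ) ^ (t - s) * sobNormT s F := by
        rw [Real.mul_rpow (by positivity) hS, Real.mul_rpow hK.le (by positivity),
          ← Real.rpow_mul hpos.le, Real.div_rpow (by positivity) zero_le_two]
        rw [show 2 * (t - s) * (1 / 2) = t - s by ring]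
        simp only [sobNormT, sobWeight]
        ring
end

section
/- Let s > 1/2 and 0 ≤ t ≤ s. There is a constant c_s depending only on s such that for every integer n ≥ 1 and every sequence (F̂_k)_{k∈ℤ} of complex numbers with Σ_{k∈ℤ}(1+|k|)^{2s}|F̂_k|² < ∞, the aliasing sums satisfy Σ_{k=−n₋}^{n₊} (1+|k|)^{2t} | Σ_{m∈ℤ, m≠0} F̂_{k+mn} |² ≤ c_s² n^{−2s} (1+n₊)^{2t} Σ_{k∈ℤ}(1+|k|)^{2s}|F̂_k|². -/
/-!
For `2|k| ≤ n` and `m ≠ 0` one has `1 + |k + mn| ≥ n|m|/2`. Cauchy–Schwarz with the weights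
`(1 + |k + mn|)^{∓s}` therefore bounds the `k`-th aliasing sum by
`2^{2s} n^{-2s} (∑_{m ≠ 0} |m|^{-2s})` times the weighted energy of `F̂` on the residue class
`k + nℤ`, and the constant is finite because `2s > 1`. The `n` indices `-n₋ ≤ k ≤ n₊` lie in
distinct residue classes, so summing over `k` gives at most the full weighted energy, while
`(1 + |k|)^{2t} ≤ (1 + n₊)^{2t}`.
-/

open Finset Function

section CauchySchwarz

variable {ι E : Type*} [NormedAddCommGroup E]

theorem summable_mul_of_summable_sq {u v : ι → ℝ} (hu : ∀ i, 0 ≤ u i) (hv : ∀ i, 0 ≤ v i)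
    (hu2 : Summable fun i => u i ^ 2) (hv2 : Summable fun i => v i ^ 2) :
    Summable fun i => u i * v i :=
  .of_nonneg_of_le (fun i => mul_nonneg (hu i) (hv i))
    (fun i => by nlinarith [sq_nonneg (u i - v i)]) ((hu2.add hv2).mul_left (1 / 2))

theorem tsum_mul_sq_le_tsum_sq_mul_tsum_sq {u v : ι → ℝ} (hu : ∀ i, 0 ≤ u i)
    (hv : ∀ i, 0 ≤ v i) (hu2 : Summable fun i => u i ^ 2) (hv2 : Summable fun i => v i ^ 2) :
    (∑' i, u i * v i) ^ 2 ≤ (∑' i, u i ^ 2) * ∑' i, v i ^ 2 := by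
  have hU : 0 ≤ ∑' i, u i ^ 2 := tsum_nonneg fun i => sq_nonneg _
  have hV : 0 ≤ ∑' i, v i ^ 2 := tsum_nonneg fun i => sq_nonneg _
  rw [← Real.sqrt_le_sqrt_iff (mul_nonneg hU hV), Real.sqrt_sq
    (tsum_nonneg fun i => mul_nonneg (hu i) (hv i))]
  refine (summable_mul_of_summable_sq hu hv hu2 hv2).tsum_le_of_sum_le fun s =>
    Real.le_sqrt_of_sq_le ?_
  calc (∑ i ∈ s, u i * v i) ^ 2 ≤ (∑ i ∈ s, u i ^ 2) * ∑ i ∈ s, v i ^ 2 :=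
        sum_mul_sq_le_sq_mul_sq s u v
    _ ≤ (∑' i, u i ^ 2) * ∑' i, v i ^ 2 :=
        mul_le_mul (hu2.sum_le_tsum s fun i _ => sq_nonneg _)
          (hv2.sum_le_tsum s fun i _ => sq_nonneg _) (sum_nonneg fun i _ => sq_nonneg _) hU

theorem norm_tsum_sq_le_of_norm_le_mul {f : ι → E} {u v : ι → ℝ} (hu : ∀ i, 0 ≤ u i)
    (hv : ∀ i, 0 ≤ v i) (hf : ∀ i, ‖f i‖ ≤ u i * v i) (hu2 : Summable fun i => u i ^ 2)
    (hv2 : Summable fun i => v i ^ 2) :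
    ‖∑' i, f i‖ ^ 2 ≤ (∑' i, u i ^ 2) * ∑' i, v i ^ 2 := by
  have huv := summable_mul_of_summable_sq hu hv hu2 hv2
  calc ‖∑' i, f i‖ ^ 2 ≤ (∑' i, u i * v i) ^ 2 := by
        gcongr
        exact tsum_of_norm_bounded huv.hasSum hf
    _ ≤ _ := tsum_mul_sq_le_tsum_sq_mul_tsum_sq hu hv hu2 hv2

end CauchySchwarz

theorem Finset.sum_tsum_le_tsum_of_injOn {α β γ : Type*} {h : β → ℝ} (hs : Summable h)
    (h0 : ∀ b, 0 ≤ h b) (K : Finset α) {e : α → γ → β}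
    (he : Set.InjOn (uncurry e) (↑K ×ˢ Set.univ)) :
    ∑ k ∈ K, ∑' m, h (e k m) ≤ ∑' b, h b := by
  set i : K × γ → β := fun p => e p.1 p.2
  have hi : Injective i := fun p q hpq => by
    have := he (x₁ := (p.1, p.2)) (x₂ := (q.1, q.2)) ⟨mem_coe.2 p.1.2, trivial⟩
      ⟨mem_coe.2 q.1.2, trivial⟩ hpq
    simp only [Prod.mk.injEq] at this
    exact Prod.ext (Subtype.ext this.1) this.2
  have hsi : Summable fun p => h (i p) := hs.comp_injective hi
  calc ∑ k ∈ K, ∑' m, h (e k m) = ∑' p : K × γ, h (i p) := by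
        rw [hsi.tsum_prod' fun k => hs.comp_injective fun m m' hm => (Prod.ext_iff.1 (hi hm)).2,
          tsum_fintype, sum_coe_sort K fun k => ∑' m, h (e k m)]
    _ ≤ ∑' b, h b := tsum_comp_le_tsum_of_inj hs h0 hi

theorem Set.injOn_add_mul_of_abs_sub_lt {K : Set ℤ} {n : ℤ}
    (hK : ∀ a ∈ K, ∀ b ∈ K, |a - b| < n) :
    Set.InjOn (fun p : ℤ × ℤ => p.1 + p.2 * n) (K ×ˢ Set.univ) := by
  rintro ⟨a, m⟩ ⟨ha, -⟩ ⟨b, m'⟩ ⟨hb, -⟩ h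
  simp only at h
  have hab : a = b := by
    have : a - b = 0 := Int.eq_zero_of_abs_lt_dvd ⟨m' - m, by linear_combination h⟩ (hK a ha b hb)
    omega
  subst hab
  have hn : n ≠ 0 := by have := hK a ha a ha; rw [sub_self, abs_zero] at this; omega
  simp [mul_right_cancel₀ hn (add_left_cancel h)]

theorem Int.mul_abs_le_two_mul_abs_add_mul {k m n : ℤ} (hk : 2 * |k| ≤ n) (hm : m ≠ 0) :
    n * |m| ≤ 2 * |k + m * n| := by
  have hn : 0 ≤ n := by linarith [abs_nonneg k]
  have htri : |m| * n ≤ |k + m * n| + |k| :=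
    calc |m| * n = |k + m * n - k| := by rw [add_sub_cancel_left, abs_mul, abs_of_nonneg hn]
      _ ≤ |k + m * n| + |k| := abs_sub _ _
  nlinarith [mul_le_mul_of_nonneg_right (Int.one_le_abs hm) hn]

theorem one_add_abs_add_mul_rpow_neg_le {σ : ℝ} (hσ : 0 ≤ σ) {n : ℕ} (hn : 0 < n) {k m : ℤ}
    (hk : 2 * |k| ≤ n) (hm : m ≠ 0) :
    (1 + |((k + m * n : ℤ) : ℝ)|) ^ (-σ) ≤ 2 ^ σ * (n : ℝ) ^ (-σ) * |(m : ℝ)| ^ (-σ) := by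
  have hlow : (n : ℝ) * |(m : ℝ)| / 2 ≤ 1 + |((k + m * n : ℤ) : ℝ)| := by
    have : (n : ℝ) * |(m : ℝ)| ≤ 2 * |((k + m * n : ℤ) : ℝ)| := by
      exact_mod_cast Int.mul_abs_le_two_mul_abs_add_mul hk hm
    linarith [abs_nonneg ((k + m * n : ℤ) : ℝ)]
  have hpos : 0 < (n : ℝ) * |(m : ℝ)| / 2 := by
    have : (m : ℝ) ≠ 0 := by exact_mod_cast hm
    positivity
  calc (1 + |((k + m * n : ℤ) : ℝ)|) ^ (-σ) ≤ ((n : ℝ) * |(m : ℝ)| / 2) ^ (-σ) :=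
        Real.rpow_le_rpow_of_nonpos hpos hlow (neg_nonpos.2 hσ)
    _ = 2 ^ σ * (n : ℝ) ^ (-σ) * |(m : ℝ)| ^ (-σ) := by
        rw [Real.div_rpow (by positivity) zero_le_two, Real.mul_rpow (by positivity) (by positivity),
          Real.rpow_neg zero_le_two, div_inv_eq_mul, mul_comm, mul_assoc]

theorem norm_tsum_aliasing_sq_le {E : Type*} [NormedAddCommGroup E] {s : ℝ} (hs : 1 / 2 < s)
    {n : ℕ} (hn : 0 < n) {k : ℤ} (hk : 2 * |k| ≤ n) {F : ℤ → E}
    (hF : Summable fun j : ℤ => (1 + |(j : ℝ)|) ^ (2 * s) * ‖F j‖ ^ 2) :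
    ‖∑' m : ℤ, if m = 0 then 0 else F (k + m * n)‖ ^ 2 ≤
      2 ^ (2 * s) * (n : ℝ) ^ (-(2 * s)) * (∑' m : ℤ, |(m : ℝ)| ^ (-(2 * s))) *
        ∑' m : ℤ, (1 + |((k + m * n : ℤ) : ℝ)|) ^ (2 * s) * ‖F (k + m * n)‖ ^ 2 := by
  set x : ℤ → ℝ := fun m => 1 + |((k + m * n : ℤ) : ℝ)|
  have hx : ∀ m, 0 < x m := fun m => by positivity
  have sq_rpow : ∀ m (r : ℝ), (x m ^ r) ^ 2 = x m ^ (2 * r) := fun m r => by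
    rw [mul_comm, ← Real.rpow_mul_natCast (hx m).le]; norm_num
  set u : ℤ → ℝ := fun m => if m = 0 then 0 else x m ^ (-s)
  set v : ℤ → ℝ := fun m => x m ^ s * ‖F (k + m * n)‖
  have hu : ∀ m, 0 ≤ u m := fun m => by
    unfold u; split_ifs
    exacts [le_rfl, Real.rpow_nonneg (hx m).le _]
  have hv : ∀ m, 0 ≤ v m := fun m => mul_nonneg (Real.rpow_nonneg (hx m).le _) (norm_nonneg _)
  have huv : ∀ m, ‖if m = 0 then 0 else F (k + m * n)‖ ≤ u m * v m := fun m => by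
    unfold u v; split_ifs
    · simp
    · rw [← mul_assoc, ← Real.rpow_add (hx m), neg_add_cancel, Real.rpow_zero, one_mul]
  have hu2 : ∀ m, u m ^ 2 ≤ 2 ^ (2 * s) * (n : ℝ) ^ (-(2 * s)) * |(m : ℝ)| ^ (-(2 * s)) :=
    fun m => by
      unfold u; split_ifs with hm
      · exact (zero_pow two_ne_zero).trans_le (by positivity)
      · rw [sq_rpow, mul_neg]
        exact one_add_abs_add_mul_rpow_neg_le (by linarith) hn hk hm
  have hv2 : ∀ m, v m ^ 2 = x m ^ (2 * s) * ‖F (k + m * n)‖ ^ 2 := fun m => by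
    rw [mul_pow, sq_rpow]
  have hA : Summable fun m : ℤ => 2 ^ (2 * s) * (n : ℝ) ^ (-(2 * s)) * |(m : ℝ)| ^ (-(2 * s)) :=
    (Real.summable_abs_int_rpow (by linarith)).mul_left _
  have hinj : Injective fun m : ℤ => k + m * n := fun m m' h => by
    simpa [hn.ne'] using h
  have hsv2 : Summable fun m => v m ^ 2 := by
    simp only [hv2]
    exact hF.comp_injective hinj
  have hsu2 : Summable fun m => u m ^ 2 := .of_nonneg_of_le (fun m => sq_nonneg _) hu2 hA
  calc ‖∑' m : ℤ, if m = 0 then 0 else F (k + m * n)‖ ^ 2 ≤ (∑' m, u m ^ 2) * ∑' m, v m ^ 2 :=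
        norm_tsum_sq_le_of_norm_le_mul hu hv huv hsu2 hsv2
    _ ≤ (∑' m : ℤ, 2 ^ (2 * s) * (n : ℝ) ^ (-(2 * s)) * |(m : ℝ)| ^ (-(2 * s))) *
          ∑' m, v m ^ 2 :=
        mul_le_mul_of_nonneg_right (hsu2.tsum_le_tsum hu2 hA) (tsum_nonneg fun m => sq_nonneg _)
    _ = _ := by rw [tsum_mul_left, tsum_congr hv2]

/-- **Aliasing estimate.** For `s > 1/2` there is a constant `c_s` depending only
on `s` such that for every `0 ≤ t ≤ s`, every `n ≥ 1` (with `n₊ = ⌊n/2⌋`,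
`n₋ = ⌊(n-1)/2⌋`) and every sequence `(F̂_k)_{k∈ℤ}` with
`∑_k (1+|k|)^{2s} |F̂_k|² < ∞`,
`∑_{k=-n₋}^{n₊} (1+|k|)^{2t} |∑_{m≠0} F̂_{k+mn}|²
  ≤ c_s² n^{-2s} (1+n₊)^{2t} ∑_k (1+|k|)^{2s} |F̂_k|²`. -/
theorem aliasing_estimate (s : ℝ) (hs : 1 / 2 < s) :
    ∃ c : ℝ, 0 < c ∧ ∀ t : ℝ, 0 ≤ t → t ≤ s → ∀ n : ℕ, 1 ≤ n → ∀ Fh : ℤ → ℂ,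
      Summable (fun k : ℤ => (1 + |(k : ℝ)|) ^ (2 * s) * ‖Fh k‖ ^ 2) →
      ∑ k ∈ Finset.Icc (-(((n - 1) / 2 : ℕ) : ℤ)) ((n / 2 : ℕ) : ℤ),
          (1 + |(k : ℝ)|) ^ (2 * t) *
            ‖∑' m : ℤ, if m = 0 then 0 else Fh (k + m * n)‖ ^ 2
        ≤ c ^ 2 * (n : ℝ) ^ (-(2 * s)) * (1 + ((n / 2 : ℕ) : ℝ)) ^ (2 * t) *
          ∑' k : ℤ, (1 + |(k : ℝ)|) ^ (2 * s) * ‖Fh k‖ ^ 2 := by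
  set A := ∑' m : ℤ, |(m : ℝ)| ^ (-(2 * s))
  have hA : 0 < A := (Real.summable_abs_int_rpow (by linarith)).tsum_pos
    (fun m => by positivity) 1 (by norm_num)
  refine ⟨√(2 ^ (2 * s) * A), by positivity, fun t ht hts n hn F hF => ?_⟩
  rw [Real.sq_sqrt (by positivity)]
  set K := Finset.Icc (-(((n - 1) / 2 : ℕ) : ℤ)) ((n / 2 : ℕ) : ℤ)
  have hK : ∀ k ∈ K, 2 * |k| ≤ n ∧ |k| ≤ ((n / 2 : ℕ) : ℤ) := fun k hk => by
    rw [Finset.mem_Icc] at hk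
    have : |k| ≤ ((n / 2 : ℕ) : ℤ) := abs_le.2 ⟨by omega, hk.2⟩
    exact ⟨by omega, this⟩
  have hinj : Set.InjOn (fun p : ℤ × ℤ => p.1 + p.2 * n) (↑K ×ˢ Set.univ) :=
    Set.injOn_add_mul_of_abs_sub_lt fun a ha b hb => by
      rw [Finset.mem_coe, Finset.mem_Icc] at ha hb
      rw [abs_lt]
      omega
  have hweight : ∀ k ∈ K, (1 + |(k : ℝ)|) ^ (2 * t) ≤ (1 + ((n / 2 : ℕ) : ℝ)) ^ (2 * t) :=
    fun k hk => by
      have : |(k : ℝ)| ≤ ((n / 2 : ℕ) : ℝ) := by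
        rw [← Int.cast_abs, ← Int.cast_natCast]; exact Int.cast_le.2 (hK k hk).2
      exact Real.rpow_le_rpow (by positivity) (by linarith) (by linarith)
  calc _ ≤ ∑ k ∈ K, (1 + ((n / 2 : ℕ) : ℝ)) ^ (2 * t) * (2 ^ (2 * s) * (n : ℝ) ^ (-(2 * s)) * A *
          ∑' m : ℤ, (1 + |((k + m * n : ℤ) : ℝ)|) ^ (2 * s) * ‖F (k + m * n)‖ ^ 2) :=
        sum_le_sum fun k hk => mul_le_mul (hweight k hk)
          (norm_tsum_aliasing_sq_le hs hn (hK k hk).1 hF) (sq_nonneg _) (by positivity)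
    _ = 2 ^ (2 * s) * A * (n : ℝ) ^ (-(2 * s)) * (1 + ((n / 2 : ℕ) : ℝ)) ^ (2 * t) *
          ∑ k ∈ K, ∑' m : ℤ, (1 + |((k + m * n : ℤ) : ℝ)|) ^ (2 * s) * ‖F (k + m * n)‖ ^ 2 := by
        rw [mul_sum]
        exact sum_congr rfl fun k _ => by ring
    _ ≤ _ := by
        gcongr
        exact K.sum_tsum_le_tsum_of_injOn hF (fun j => by positivity) hinj
end

section
/- Let 1 < p < ∞. There is a constant C_p such that for every odd integer n > 1 and every real ε with 0 ≤ ε ≤ π n₋, the derivative of the Dirichlet kernel satisfies ( ∫_{ε/n₋}^{2π − ε/n₋} | D_n′(θ) |^p dθ )^{1/p} ≤ C_p (1+ε) ( n₋ / (1+ε) )^{2 − 1/p}. -/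
/-- The Dirichlet kernel `D_n(θ) = ∑_{k=-n₋}^{n₊} e^{ikθ}`,
with `n₊ = ⌊n/2⌋`, `n₋ = ⌊(n-1)/2⌋`. -/
noncomputable def DirK (n : ℕ) (θ : ℝ) : ℂ :=
  ∑ k ∈ Finset.Icc (-(((n - 1) / 2 : ℕ) : ℤ)) ((n / 2 : ℕ) : ℤ),
    Complex.exp (Complex.I * (k : ℂ) * (θ : ℂ))

/-!
For odd `n = 2m + 1` one has `D_n′(θ) = i (S(e^{iθ}) - S(e^{-iθ}))` with `S(w) = ∑_{k ≤ m} k w^k`,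
and summation by parts gives `(w - 1)² S(w) = m w^{m+2} - (m+1) w^{m+1} + w`. For `|w| = 1` this
yields `|S(w)| |w - 1|² ≤ m |w - 1| + 2`, which together with the trivial bound
`|S(w)| ≤ m (m + 1)` gives `|S(w)| (1 + m |w - 1|) ≤ 6 m²`. Since `|e^{iθ} - 1| ≥ 2θ/π` on `[0, π]`,
`|D_n′(θ)| ≤ 6π m² / (1 + m θ)` there, and likewise for `D_n′(2π - θ)`. Integrating the `p`-th
power of this envelope from `ε/m` to `π` gives `(6π m²)^p (1 + ε)^{1-p} / (m (p - 1))`, whose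
`p`-th root is the claimed bound.
-/

open Finset Complex
open scoped Real

theorem sum_Icc_neg_natCast_add_apply_zero {M : Type*} [AddCommMonoid M] (f : ℤ → M) (N : ℕ) :
    ∑ k ∈ Icc (-N : ℤ) N, f k + f 0 = ∑ k ∈ range (N + 1), (f k + f (-k)) := by
  induction N with
  | zero => simp
  | succ N ih =>
    rw [Nat.cast_add, Nat.cast_one, Icc_succ_succ, sum_union (by simp), sum_pair (by lia),
      add_right_comm, ih, sum_range_succ _ (N + 1), Nat.cast_succ, add_comm (f _)]

theorem sq_sub_one_mul_sum_range_mul_pow {R : Type*} [CommRing R] (w : R) (m : ℕ) :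
    (w - 1) ^ 2 * ∑ k ∈ range (m + 1), (k : R) * w ^ k
      = m * w ^ (m + 2) - (m + 1) * w ^ (m + 1) + w := by
  induction m with
  | zero => simp
  | succ m ih =>
    rw [sum_range_succ, mul_add, ih]
    push_cast
    ring

section

variable {𝕜 : Type*} [NormedField 𝕜] {w : 𝕜}

theorem norm_sum_range_mul_pow_le (hw : ‖w‖ = 1) (m : ℕ) :
    ‖∑ k ∈ range (m + 1), (k : 𝕜) * w ^ k‖ ≤ m * (m + 1) := by
  calc ‖∑ k ∈ range (m + 1), (k : 𝕜) * w ^ k‖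
      ≤ ∑ k ∈ range (m + 1), ‖(k : 𝕜) * w ^ k‖ := norm_sum_le _ _
    _ ≤ ∑ _k ∈ range (m + 1), (m : ℝ) := by
      refine sum_le_sum fun k hk => ?_
      rw [norm_mul, norm_pow, hw, one_pow, mul_one]
      refine (Nat.norm_cast_le k).trans ?_
      rw [norm_one, mul_one, Nat.cast_le]
      exact Nat.lt_succ_iff.mp (mem_range.mp hk)
    _ = m * (m + 1) := by simp [mul_comm]

theorem norm_sum_range_mul_pow_mul_sq_le (hw : ‖w‖ = 1) (m : ℕ) :
    ‖∑ k ∈ range (m + 1), (k : 𝕜) * w ^ k‖ * ‖w - 1‖ ^ 2 ≤ m * ‖w - 1‖ + 2 := by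
  have key : (w - 1) ^ 2 * ∑ k ∈ range (m + 1), (k : 𝕜) * w ^ k
      = m * w ^ (m + 1) * (w - 1) - w * (w ^ m - 1) := by
    rw [sq_sub_one_mul_sum_range_mul_pow]; ring
  have hwm : ‖w ^ m - 1‖ ≤ 2 := by
    simpa [hw, one_add_one_eq_two] using norm_sub_le (w ^ m) 1
  rw [← norm_pow, mul_comm, ← norm_mul, key]
  refine (norm_sub_le _ _).trans ?_
  simp only [norm_mul, norm_pow, hw, one_pow, mul_one, one_mul]
  gcongr
  simpa using Nat.norm_cast_le (α := 𝕜) m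

theorem norm_sum_range_mul_pow_mul_le (hw : ‖w‖ = 1) (m : ℕ) :
    ‖∑ k ∈ range (m + 1), (k : 𝕜) * w ^ k‖ * (1 + m * ‖w - 1‖) ≤ 6 * m ^ 2 := by
  set s := ‖∑ k ∈ range (m + 1), (k : 𝕜) * w ^ k‖
  set d := ‖w - 1‖
  have hcrude : s ≤ m * (m + 1) := norm_sum_range_mul_pow_le hw m
  have hfine : s * d ^ 2 ≤ m * d + 2 := norm_sum_range_mul_pow_mul_sq_le hw m
  have hm : (m : ℝ) ≤ m ^ 2 := by exact_mod_cast Nat.le_self_pow two_ne_zero m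
  have hs : 0 ≤ s := norm_nonneg _
  rcases le_total (m * d) 1 with hmd | hmd
  · nlinarith
  · have hd : 0 < d := by nlinarith [norm_nonneg (w - 1)]
    -- now `1 / d ≤ m`, so `hfine` gives `s * d ≤ 3 * m`
    have hsmd : s * m * d ≤ 3 * m ^ 2 := by
      have : s * d * (m * d) ≤ 3 * m ^ 2 * d := by nlinarith
      nlinarith
    nlinarith

end

theorem norm_exp_neg_I_mul_ofReal_sub_one (θ : ℝ) :
    ‖exp (-(I * θ)) - 1‖ = ‖exp (I * θ) - 1‖ := by
  rw [← RCLike.norm_conj, map_sub, map_one, ← exp_conj]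
  simp

theorem norm_exp_I_mul_two_pi_sub_sub_one (θ : ℝ) :
    ‖exp (I * ↑(2 * π - θ)) - 1‖ = ‖exp (I * θ) - 1‖ := by
  rw [norm_exp_I_mul_ofReal_sub_one, norm_exp_I_mul_ofReal_sub_one,
    show (2 * π - θ) / 2 = π - θ / 2 by ring, Real.sin_pi_sub]

theorem two_mul_div_pi_le_norm_exp_I_mul_sub_one {θ : ℝ} (h0 : 0 ≤ θ) (hπ : θ ≤ π) :
    2 * θ / π ≤ ‖exp (I * θ) - 1‖ := by
  rw [norm_exp_I_mul_ofReal_sub_one, Real.norm_eq_abs]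
  have hsin := Real.mul_le_sin (x := θ / 2) (by linarith) (by linarith)
  calc 2 * θ / π = 2 * (2 / π * (θ / 2)) := by ring
    _ ≤ |2 * Real.sin (θ / 2)| := by
      rw [abs_mul, abs_two]
      gcongr
      exact hsin.trans (le_abs_self _)

theorem hasDerivAt_dirK (n : ℕ) (θ : ℝ) :
    HasDerivAt (DirK n)
      (∑ k ∈ Icc (-(((n - 1) / 2 : ℕ) : ℤ)) ((n / 2 : ℕ) : ℤ), I * k * exp (I * k * θ)) θ :=
  HasDerivAt.fun_sum fun k _ => by
    simpa [mul_comm] using ((hasDerivAt_id (θ : ℂ)).const_mul (I * k)).cexp.comp_ofReal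

theorem continuous_deriv_dirK (n : ℕ) : Continuous (deriv (DirK n)) := by
  rw [funext fun θ => (hasDerivAt_dirK n θ).deriv]
  fun_prop

theorem deriv_dirK_two_mul_add_one (m : ℕ) (θ : ℝ) :
    deriv (DirK (2 * m + 1)) θ = I * (∑ k ∈ range (m + 1), (k : ℂ) * exp (I * θ) ^ k
      - ∑ k ∈ range (m + 1), (k : ℂ) * exp (-(I * θ)) ^ k) := by
  rw [(hasDerivAt_dirK _ θ).deriv, show (2 * m + 1 - 1) / 2 = m by omega,
    show (2 * m + 1) / 2 = m by omega]
  have hsym := sum_Icc_neg_natCast_add_apply_zero (fun k : ℤ => I * k * exp (I * k * θ)) m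
  simp only [Int.cast_zero, mul_zero, zero_mul, add_zero] at hsym
  rw [hsym, mul_sub, mul_sum, mul_sum, ← sum_sub_distrib]
  refine sum_congr rfl fun k _ => ?_
  push_cast
  rw [← exp_nat_mul, ← exp_nat_mul]
  ring_nf

theorem norm_deriv_dirK_mul_le (m : ℕ) (θ : ℝ) :
    ‖deriv (DirK (2 * m + 1)) θ‖ * (1 + m * ‖exp (I * θ) - 1‖) ≤ 12 * m ^ 2 := by
  have hz := norm_sum_range_mul_pow_mul_le (norm_exp_I_mul_ofReal θ) m
  have hz' := norm_sum_range_mul_pow_mul_le (w := exp (-(I * θ)))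
    (by simpa using norm_exp_I_mul_ofReal (-θ)) m
  rw [norm_exp_neg_I_mul_ofReal_sub_one] at hz'
  rw [deriv_dirK_two_mul_add_one, norm_mul, norm_I, one_mul]
  calc _ ≤ (‖∑ k ∈ range (m + 1), (k : ℂ) * exp (I * θ) ^ k‖
          + ‖∑ k ∈ range (m + 1), (k : ℂ) * exp (-(I * θ)) ^ k‖)
        * (1 + m * ‖exp (I * θ) - 1‖) := by
        gcongr
        exact norm_sub_le _ _
    _ ≤ 12 * m ^ 2 := by linarith

theorem norm_deriv_dirK_mul_le_of_le_norm (m : ℕ) {x t : ℝ} (ht : 0 ≤ t)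
    (hd : 2 * t / π ≤ ‖exp (I * x) - 1‖) :
    ‖deriv (DirK (2 * m + 1)) x‖ * (1 + m * t) ≤ 6 * π * m ^ 2 := by
  have hmain := norm_deriv_dirK_mul_le m x
  have hπ := Real.pi_gt_three
  have hcmp : 2 / π * (1 + m * t) ≤ 1 + m * ‖exp (I * x) - 1‖ := by
    have : 2 / π ≤ 1 := by rw [div_le_one (by positivity)]; linarith
    calc 2 / π * (1 + m * t) = 2 / π + m * (2 * t / π) := by ring
      _ ≤ 1 + m * ‖exp (I * x) - 1‖ := by gcongr
  have : ‖deriv (DirK (2 * m + 1)) x‖ * (2 / π * (1 + m * t)) ≤ 12 * m ^ 2 :=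
    (mul_le_mul_of_nonneg_left hcmp (norm_nonneg _)).trans hmain
  calc ‖deriv (DirK (2 * m + 1)) x‖ * (1 + m * t)
      = π / 2 * (‖deriv (DirK (2 * m + 1)) x‖ * (2 / π * (1 + m * t))) := by
        field_simp
    _ ≤ π / 2 * (12 * m ^ 2) := by gcongr
    _ = 6 * π * m ^ 2 := by ring

theorem integral_one_add_mul_rpow_neg_le {c a b p : ℝ} (hc : 0 < c) (ha : 0 ≤ a) (hab : a ≤ b)
    (hp : 1 < p) :
    ∫ x in a..b, (1 + c * x) ^ (-p) ≤ (1 + c * a) ^ (1 - p) / (c * (p - 1)) := by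
  have hpos : ∀ x ∈ Set.uIcc (c * a + 1) (c * b + 1), 0 < x := fun x hx => by
    rw [Set.uIcc_of_le (by gcongr)] at hx
    nlinarith [hx.1]
  simp_rw [add_comm 1 (c * _)]
  rw [intervalIntegral.integral_comp_mul_add (fun x => x ^ (-p)) hc.ne',
    integral_rpow (Or.inr ⟨by linarith, fun h => (hpos 0 h).false⟩), smul_eq_mul,
    show -p + 1 = -(p - 1) by ring, div_neg, ← neg_div, neg_sub, show 1 - p = -(p - 1) by ring,
    inv_mul_eq_div, div_div, mul_comm (p - 1)]
  gcongr
  exact sub_le_self _ (Real.rpow_nonneg (hpos _ Set.right_mem_uIcc).le _)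

theorem integral_norm_deriv_dirK_comp_rpow_le {p : ℝ} (hp : 1 < p) {m : ℕ} (hm : 0 < m)
    {δ : ℝ} (hδ : 0 ≤ δ) (hδπ : δ ≤ π) {x : ℝ → ℝ} (hx : Continuous x)
    (hxd : ∀ θ ∈ Set.Icc 0 π, 2 * θ / π ≤ ‖exp (I * x θ) - 1‖) :
    ∫ θ in δ..π, ‖deriv (DirK (2 * m + 1)) (x θ)‖ ^ p
      ≤ (6 * π * m ^ 2) ^ p * ((1 + m * δ) ^ (1 - p) / (m * (p - 1))) := by
  have hp0 : 0 ≤ p := by linarith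
  have hpos : ∀ θ, 0 ≤ θ → 0 < 1 + (m : ℝ) * θ := fun θ hθ => by positivity
  have hcont : ContinuousOn (fun θ : ℝ => (1 + (m : ℝ) * θ) ^ (-p)) (Set.uIcc δ π) := by
    refine ContinuousOn.rpow_const (by fun_prop) fun θ hθ => Or.inl (hpos θ ?_).ne'
    rw [Set.uIcc_of_le hδπ] at hθ
    exact hδ.trans hθ.1
  calc ∫ θ in δ..π, ‖deriv (DirK (2 * m + 1)) (x θ)‖ ^ p
      ≤ ∫ θ in δ..π, (6 * π * m ^ 2) ^ p * (1 + m * θ) ^ (-p) := by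
        have hint : Continuous fun θ => ‖deriv (DirK (2 * m + 1)) (x θ)‖ ^ p :=
          ((continuous_deriv_dirK _).comp hx).norm.rpow_const fun _ => Or.inr hp0
        refine intervalIntegral.integral_mono_on hδπ (hint.intervalIntegrable _ _)
          (hcont.intervalIntegrable.const_mul _) fun θ hθ => ?_
        have hθ0 : 0 ≤ θ := hδ.trans hθ.1
        have hbound := norm_deriv_dirK_mul_le_of_le_norm m hθ0 (hxd θ ⟨hθ0, hθ.2⟩)
        rw [← le_div_iff₀ (hpos θ hθ0)] at hbound
        calc ‖deriv (DirK (2 * m + 1)) (x θ)‖ ^ p ≤ (6 * π * m ^ 2 / (1 + m * θ)) ^ p :=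
              Real.rpow_le_rpow (norm_nonneg _) hbound hp0
          _ = (6 * π * m ^ 2) ^ p * (1 + m * θ) ^ (-p) := by
              rw [Real.div_rpow (by positivity) (hpos θ hθ0).le, Real.rpow_neg (hpos θ hθ0).le,
                div_eq_mul_inv]
    _ = (6 * π * m ^ 2) ^ p * ∫ θ in δ..π, (1 + m * θ) ^ (-p) :=
        intervalIntegral.integral_const_mul _ _
    _ ≤ (6 * π * m ^ 2) ^ p * ((1 + m * δ) ^ (1 - p) / (m * (p - 1))) := by
        gcongr
        exact integral_one_add_mul_rpow_neg_le (by exact_mod_cast hm) hδ hδπ hp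

theorem integral_norm_deriv_dirK_rpow_le {p : ℝ} (hp : 1 < p) {m : ℕ} (hm : 0 < m)
    {δ : ℝ} (hδ : 0 ≤ δ) (hδπ : δ ≤ π) :
    ∫ θ in δ..2 * π - δ, ‖deriv (DirK (2 * m + 1)) θ‖ ^ p
      ≤ 2 * ((6 * π * m ^ 2) ^ p * ((1 + m * δ) ^ (1 - p) / (m * (p - 1)))) := by
  have hg : Continuous fun θ => ‖deriv (DirK (2 * m + 1)) θ‖ ^ p :=
    (continuous_deriv_dirK _).norm.rpow_const fun _ => Or.inr (by linarith)
  have hreflect : ∫ θ in π..2 * π - δ, ‖deriv (DirK (2 * m + 1)) θ‖ ^ p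
      = ∫ θ in δ..π, ‖deriv (DirK (2 * m + 1)) (2 * π - θ)‖ ^ p := by
    rw [intervalIntegral.integral_comp_sub_left (fun θ => ‖deriv (DirK (2 * m + 1)) θ‖ ^ p),
      show 2 * π - π = π by ring]
  rw [← intervalIntegral.integral_add_adjacent_intervals (hg.intervalIntegrable δ π)
    (hg.intervalIntegrable π _), hreflect]
  have hleft := integral_norm_deriv_dirK_comp_rpow_le hp hm hδ hδπ continuous_id
    fun θ hθ => two_mul_div_pi_le_norm_exp_I_mul_sub_one hθ.1 hθ.2
  have hright := integral_norm_deriv_dirK_comp_rpow_le hp hm hδ hδπ (x := (2 * π - ·))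
    (by fun_prop) fun θ hθ => (norm_exp_I_mul_two_pi_sub_sub_one θ).symm ▸
      two_mul_div_pi_le_norm_exp_I_mul_sub_one hθ.1 hθ.2
  simp only [id] at hleft
  linarith

theorem rpow_one_div_eq_mul_mul_div_rpow_two_sub {A x y p : ℝ} (hA : 0 ≤ A) (hx : 0 < x)
    (hy : 0 < y) (hp : 1 < p) :
    (2 * ((A * x ^ 2) ^ p * (y ^ (1 - p) / (x * (p - 1))))) ^ (1 / p)
      = (2 * A ^ p / (p - 1)) ^ (1 / p) * y * (x / y) ^ (2 - 1 / p) := by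
  have hp0 : 0 < p := by linarith
  have hp1 : 0 < p - 1 := by linarith
  have hxy : 0 < x / y := by positivity
  have hsq : ∀ z : ℝ, 0 < z → z ^ (2 * p) = (z ^ p) ^ 2 := fun z hz => by
    rw [← Real.rpow_natCast, ← Real.rpow_mul hz.le]; ring_nf
  have key : 2 * ((A * x ^ 2) ^ p * (y ^ (1 - p) / (x * (p - 1))))
      = 2 * A ^ p / (p - 1) * y ^ p * (x / y) ^ (2 * p - 1) := by
    rw [Real.mul_rpow hA (by positivity), ← Real.rpow_natCast, ← Real.rpow_mul hx.le,
      Real.rpow_sub hxy, Real.rpow_one, Real.rpow_sub hy, Real.rpow_one, Real.div_rpow hx.le hy.le,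
      Nat.cast_ofNat, hsq x hx, hsq y hy]
    have : 0 < y ^ p := by positivity
    have : 0 < x ^ p := by positivity
    field_simp
  rw [key, Real.mul_rpow (by positivity) (by positivity),
    Real.mul_rpow (by positivity) (by positivity), ← Real.rpow_mul hy.le, ← Real.rpow_mul hxy.le,
    mul_one_div_cancel hp0.ne', Real.rpow_one]
  congr 2
  field_simp

/-- **Localized `L^p` bound for the derivative of the Dirichlet kernel.** For
`1 < p < ∞` there is a constant `C_p` such that for every odd `n > 1` and every
`0 ≤ ε ≤ π n₋`,
`‖D_n′‖_{L^p(ε/n₋, 2π − ε/n₋)} ≤ C_p (1+ε) (n₋/(1+ε))^{2−1/p}`. -/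
theorem dirichlet_kernel_deriv_localized_Lp (p : ℝ) (hp : 1 < p) :
    ∃ C : ℝ, 0 < C ∧ ∀ n : ℕ, 1 < n → Odd n → ∀ ε : ℝ,
      0 ≤ ε → ε ≤ Real.pi * (((n - 1) / 2 : ℕ) : ℝ) →
      (∫ θ in (ε / (((n - 1) / 2 : ℕ) : ℝ))..(2 * Real.pi - ε / (((n - 1) / 2 : ℕ) : ℝ)),
          ‖deriv (DirK n) θ‖ ^ p) ^ (1 / p)
        ≤ C * (1 + ε) * ((((n - 1) / 2 : ℕ) : ℝ) / (1 + ε)) ^ (2 - 1 / p) := by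
  refine ⟨(2 * (6 * π) ^ p / (p - 1)) ^ (1 / p),
    Real.rpow_pos_of_pos (div_pos (by positivity) (by linarith)) _, ?_⟩
  rintro n hn ⟨m, rfl⟩ ε hε hεπ
  rw [show (2 * m + 1 - 1) / 2 = m by omega] at hεπ ⊢
  have hm₀ : 0 < m := by omega
  have hm : (0 : ℝ) < m := by exact_mod_cast hm₀
  have hδπ : ε / m ≤ π := (div_le_iff₀ hm).mpr hεπ
  have hbound := integral_norm_deriv_dirK_rpow_le hp hm₀ (div_nonneg hε hm.le) hδπ
  rw [mul_div_cancel₀ _ hm.ne'] at hbound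
  calc _ ≤ (2 * ((6 * π * m ^ 2) ^ p * ((1 + ε) ^ (1 - p) / (m * (p - 1))))) ^ (1 / p) :=
        Real.rpow_le_rpow (intervalIntegral.integral_nonneg (by linarith) fun _ _ => by positivity)
          hbound (by positivity)
    _ = _ := rpow_one_div_eq_mul_mul_div_rpow_two_sub (by positivity) hm (by linarith) hp
end
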